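/- arXiv:2401.00661 — 3 statements merged into one kernel-verified Lean document; each statement's English description precedes it below -/
import Mathlib

section
/- In an anonymous hedonic game where each player's utility for a coalition depends only on the coalition's chosen facility and its size, and where every player's utility is single-peaked-at-one (SPAO), i.e., for every player the utility from being in a coalition weakly decreases whenever the size of the coalition they belong to strictly increases, a Nash stable partition always exists. -/
/-- Size of the coalition at facility `e` under assignment `s`. -/
def CoalitionSize {B E : Type*} [Fintype B] [DecidableEq E] (s : B → E) (e : E) : ℕ :=
  (Finset.univ.filter (fun j => s j = e)).card

/-- Size of the coalition at facility `e` after player `i` unilaterally deviates to `e`. -/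
def DevSize {B E : Type*} [Fintype B] [DecidableEq E] (s : B → E) (i : B) (e : E) : ℕ :=
  CoalitionSize s e + (if s i = e then 0 else 1)

/-- A partition (assignment) is Nash stable if no player can strictly improve by
unilaterally switching to another facility. -/
def NashStable {B E : Type*} [Fintype B] [DecidableEq E]
    (u : B → E → ℕ → ℝ) (s : B → E) : Prop :=
  ∀ i : B, ∀ e : E, u i e (DevSize s i e) ≤ u i (s i) (CoalitionSize s (s i))

/-- SPAO: each player's utility for each facility is non-increasing in the size of
its own coalition. -/
def SPAO {B E : Type*} (u : B → E → ℕ → ℝ) : Prop :=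
  ∀ i : B, ∀ e : E, ∀ m m' : ℕ, m ≤ m' → u i e m' ≤ u i e m

set_option linter.unusedSectionVars false

section Aux

variable {B E : Type*} [DecidableEq B] [DecidableEq E]

/-- Size of the coalition at `e` among the players of `S`. -/
def SizeOn (S : Finset B) (s : B → E) (e : E) : ℕ :=
  (S.filter (fun j => s j = e)).card

/-- Nash stability restricted to the players of `S`. -/
def StableOn (u : B → E → ℕ → ℝ) (S : Finset B) (s : B → E) : Prop :=
  ∀ i ∈ S, ∀ e : E,
    u i e (SizeOn S s e + if s i = e then 0 else 1) ≤ u i (s i) (SizeOn S s (s i))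

lemma SizeOn_eq_sum (S : Finset B) (s : B → E) (e : E) :
    SizeOn S s e = ∑ j ∈ S, (if s j = e then 1 else 0) := by
  unfold SizeOn
  rw [Finset.card_filter]

lemma SizeOn_congr {S : Finset B} {s t : B → E} (h : ∀ j ∈ S, s j = t j) (e : E) :
    SizeOn S s e = SizeOn S t e := by
  rw [SizeOn_eq_sum, SizeOn_eq_sum]
  exact Finset.sum_congr rfl fun j hj => by rw [h j hj]

lemma SizeOn_update {S : Finset B} {j : B} (hj : j ∈ S) (s : B → E) (a e : E) :
    SizeOn S (Function.update s j a) e + (if s j = e then 1 else 0)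
      = SizeOn S s e + (if a = e then 1 else 0) := by
  have key : ∀ x, (if Function.update s j a x = e then (1 : ℕ) else 0)
      = Function.update (fun x => if s x = e then (1 : ℕ) else 0) j
          (if a = e then 1 else 0) x := by
    intro x
    by_cases hx : x = j
    · subst hx; simp
    · simp [Function.update_of_ne hx]
  rw [SizeOn_eq_sum, SizeOn_eq_sum, Finset.sum_congr rfl fun x _ => key x,
    Finset.sum_update_of_mem hj, ← Finset.sum_erase_add S _ hj, Finset.erase_eq]
  ring

lemma SizeOn_insert {S : Finset B} {i : B} (hi : i ∉ S) (s : B → E) (e : E) :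
    SizeOn (insert i S) s e = SizeOn S s e + (if s i = e then 1 else 0) := by
  rw [SizeOn_eq_sum, SizeOn_eq_sum, Finset.sum_insert hi]
  ring

variable [Fintype E] [Nonempty E]

/-- The token process: given a "base" congestion profile `c` (coming from a stable
assignment `s'` of a smaller game), a set `M` of players that have already moved to a
best reply against `c + 1`, and a current assignment `s` whose congestion is `c` plus one
extra player at the token facility `f`, the process terminates in a stable assignment. -/
lemma nash_step (u : B → E → ℕ → ℝ) (hSPAO : SPAO u) (S : Finset B) (c : E → ℕ)
    (s' : B → E) :
    ∀ k : ℕ, ∀ (M : Finset B) (s : B → E) (f : E),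
      (S \ M).card ≤ k →
      (∀ j ∈ S \ M, ∀ e, e ≠ s' j → u j e (c e + 1) ≤ u j (s' j) (c (s' j))) →
      (∀ e, SizeOn S s e = c e + (if f = e then 1 else 0)) →
      (∀ j ∈ S \ M, s j = s' j) →
      (∀ m ∈ M, ∀ e, u m e (c e + 1) ≤ u m (s m) (c (s m) + 1)) →
      ∃ t : B → E, StableOn u S t := by
  intro k
  induction k with
  | zero =>
    intro M s f hcard hH0 hcount hunmoved hcert
    -- every player has moved, hence everyone is happy
    refine ⟨s, fun j hjS e0 => ?_⟩
    have hjM : j ∈ M := by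
      by_contra hjM
      have : j ∈ S \ M := Finset.mem_sdiff.mpr ⟨hjS, hjM⟩
      have := Finset.card_pos.mpr ⟨j, this⟩
      omega
    by_cases heq : s j = e0
    · subst heq; simp
    · have h1 : u j e0 (SizeOn S s e0 + if s j = e0 then 0 else 1) ≤ u j e0 (c e0 + 1) := by
        rw [hcount e0, if_neg heq]
        apply hSPAO
        split_ifs <;> omega
      have h2 : u j (s j) (c (s j) + 1) ≤ u j (s j) (SizeOn S s (s j)) := by
        rw [hcount (s j)]
        apply hSPAO
        split_ifs <;> omega
      exact h1.trans ((hcert j hjM e0).trans h2)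
  | succ k ih =>
    intro M s f hcard hH0 hcount hunmoved hcert
    by_cases hst : StableOn u S s
    · exact ⟨s, hst⟩
    -- find an unhappy player j
    rw [StableOn] at hst
    push_neg at hst
    obtain ⟨j, hjS, e0, hlt⟩ := hst
    -- moved players are happy
    have hmoved_happy : ∀ m ∈ M, ∀ e,
        u m e (SizeOn S s e + if s m = e then 0 else 1) ≤ u m (s m) (SizeOn S s (s m)) := by
      intro m hm e
      by_cases heq : s m = e
      · subst heq; simp
      · have h1 : u m e (SizeOn S s e + if s m = e then 0 else 1) ≤ u m e (c e + 1) := by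
          rw [hcount e, if_neg heq]
          apply hSPAO
          split_ifs <;> omega
        have h2 : u m (s m) (c (s m) + 1) ≤ u m (s m) (SizeOn S s (s m)) := by
          rw [hcount (s m)]
          apply hSPAO
          split_ifs <;> omega
        exact h1.trans ((hcert m hm e).trans h2)
    have hjM : j ∉ M := fun hm => absurd hlt (not_lt.mpr (hmoved_happy j hm e0))
    have hjSM : j ∈ S \ M := Finset.mem_sdiff.mpr ⟨hjS, hjM⟩
    have hsj : s j = s' j := hunmoved j hjSM
    -- the unhappy player must sit at the token facility
    have hjf : s j = f := by
      by_contra hne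
      apply absurd hlt (not_lt.mpr ?_)
      by_cases heq : s j = e0
      · subst heq; simp
      · have h1 : u j e0 (SizeOn S s e0 + if s j = e0 then 0 else 1) ≤ u j e0 (c e0 + 1) := by
          rw [hcount e0, if_neg heq]
          apply hSPAO
          split_ifs <;> omega
        have h2 : u j e0 (c e0 + 1) ≤ u j (s' j) (c (s' j)) := by
          apply hH0 j hjSM
          rw [← hsj]; exact fun h => heq h.symm
        have h3 : SizeOn S s (s j) = c (s j) := by
          rw [hcount (s j), if_neg (fun h => hne h.symm)]
          omega
        have h2' : u j e0 (c e0 + 1) ≤ u j (s j) (c (s j)) := by rw [hsj]; exact h2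
        rw [h3]
        exact h1.trans h2'
    -- j strictly prefers some e0 ≠ f
    have he0f : e0 ≠ f := by
      intro h
      subst h
      rw [hjf] at hlt
      simp at hlt
    have hfe0 : f ≠ e0 := Ne.symm he0f
    have hstrict : u j f (c f + 1) < u j e0 (c e0 + 1) := by
      rw [hjf] at hlt
      rw [hcount e0, hcount f] at hlt
      simpa [hfe0] using hlt
    -- move j to its best reply e2
    obtain ⟨e2, -, he2⟩ := Finset.exists_max_image Finset.univ
      (fun e => u j e (c e + 1)) Finset.univ_nonempty
    have he2max : ∀ e, u j e (c e + 1) ≤ u j e2 (c e2 + 1) := fun e => he2 e (Finset.mem_univ e)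
    have he2f : e2 ≠ f := by
      intro h
      subst h
      exact absurd (he2max e0) (not_le.mpr hstrict)
    have hsub : S \ insert j M ⊆ S \ M :=
      Finset.sdiff_subset_sdiff (Finset.Subset.refl S) (Finset.subset_insert j M)
    refine ih (insert j M) (Function.update s j e2) e2 ?_ ?_ ?_ ?_ ?_
    · rw [Finset.sdiff_insert]
      have h1 := Finset.card_erase_of_mem hjSM
      have h2 := Finset.card_pos.mpr ⟨j, hjSM⟩
      omega
    · exact fun j' hj' => hH0 j' (hsub hj')
    · intro e
      have hu := SizeOn_update hjS s e2 e
      rw [hjf, hcount e] at hu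
      split_ifs at hu ⊢ <;> omega
    · intro j' hj'
      have hj'ne : j' ≠ j := by
        have := (Finset.mem_sdiff.mp hj').2
        simp only [Finset.mem_insert, not_or] at this
        exact this.1
      rw [Function.update_of_ne hj'ne]
      exact hunmoved j' (hsub hj')
    · intro m hm e
      rcases Finset.mem_insert.mp hm with rfl | hm'
      · rw [Function.update_self]
        exact he2max e
      · have hne : m ≠ j := fun h => hjM (h ▸ hm')
        rw [Function.update_of_ne hne]
        exact hcert m hm' e

/-- A stable assignment exists for every finite set of players: induction on the set,
inserting one player at a time and re-stabilizing with `nash_step`. -/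
lemma stableOn_exists (u : B → E → ℕ → ℝ) (hSPAO : SPAO u) (S : Finset B) :
    ∃ s : B → E, StableOn u S s := by
  induction S using Finset.induction_on with
  | empty =>
    exact ⟨fun _ => Classical.arbitrary E, fun i hi => absurd hi (by simp)⟩
  | @insert i S' hi ih =>
    obtain ⟨s', hs'⟩ := ih
    set c : E → ℕ := SizeOn S' s' with hc
    obtain ⟨f0, -, hf0⟩ := Finset.exists_max_image Finset.univ
      (fun e => u i e (c e + 1)) Finset.univ_nonempty
    refine nash_step u hSPAO (insert i S') c s' (insert i S' \ {i}).card {i}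
      (Function.update s' i f0) f0 le_rfl ?_ ?_ ?_ ?_
    · intro j hj e hne
      have hjS' : j ∈ S' := by
        rcases Finset.mem_sdiff.mp hj with ⟨hj1, hj2⟩
        rcases Finset.mem_insert.mp hj1 with rfl | h
        · exact absurd (Finset.mem_singleton_self j) hj2
        · exact h
      have := hs' j hjS' e
      rwa [if_neg (fun h => hne h.symm)] at this
    · intro e
      rw [SizeOn_insert hi, Function.update_self]
      have : SizeOn S' (Function.update s' i f0) e = c e := by
        rw [hc]
        exact SizeOn_congr (fun j hj =>
          Function.update_of_ne (ne_of_mem_of_not_mem hj hi) f0 s') e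
      rw [this]
    · intro j hj
      have hjne : j ≠ i := by
        have := (Finset.mem_sdiff.mp hj).2
        simpa using this
      exact Function.update_of_ne hjne f0 s'
    · intro m hm e
      rw [Finset.mem_singleton] at hm
      subst hm
      rw [Function.update_self]
      exact hf0 e (Finset.mem_univ e)

end Aux

/-- In an anonymous hedonic game satisfying the SPAO condition, a Nash stable
partition always exists. -/
theorem spao_nash_stable_exists
    {B E : Type*} [Fintype B] [Fintype E] [DecidableEq B] [DecidableEq E] [Nonempty E]
    (u : B → E → ℕ → ℝ) (hSPAO : SPAO u) :
    ∃ s : B → E, NashStable u s := by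
  obtain ⟨s, hs⟩ := stableOn_exists u hSPAO (Finset.univ : Finset B)
  exact ⟨s, fun i e => hs i (Finset.mem_univ i) e⟩
end

section
/- If an anonymous hedonic game instance satisfying SPAO is at a Nash stable partition, then after adding one new player whose utilities also satisfy SPAO with respect to every facility, the extended instance still satisfies SPAO, admits a Nash stable partition, and best-response dynamics started from the old stable partition (with the new player initially unassigned) converges to a Nash stable partition in at most |B|+1 deviation steps. -/
def DeviationStep {B E : Type*} [Fintype B] [DecidableEq B] [DecidableEq E]
    (u : B → E → ℕ → ℝ) (s s' : B → E) : Prop :=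
  ∃ i : B, ∃ e : E,
    u i (s i) (CoalitionSize s (s i)) < u i e (DevSize s i e) ∧
    s' = Function.update s i e

def ExtUtility {B E : Type*} (u : B → E → ℕ → ℝ) (v : E → ℕ → ℝ) :
    Option B → E → ℕ → ℝ :=
  fun i => Option.elim i v u

/- ----------------- auxiliary lemmas ----------------- -/

lemma coalitionSize_eq_sum {B E : Type*} [Fintype B] [DecidableEq E] (s : B → E) (e : E) :
    CoalitionSize s e = ∑ j, (if s j = e then 1 else 0) := by
  rw [CoalitionSize, Finset.card_filter]

lemma size_update {B E : Type*} [Fintype B] [DecidableEq E] [DecidableEq B]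
    (t : B → E) (i : B) (e g : E) :
    CoalitionSize (Function.update t i e) g + (if t i = g then 1 else 0)
      = CoalitionSize t g + (if e = g then 1 else 0) := by
  rw [coalitionSize_eq_sum, coalitionSize_eq_sum,
    ← Finset.add_sum_erase _ _ (Finset.mem_univ i),
    ← Finset.add_sum_erase _ _ (Finset.mem_univ i)]
  have h : ∀ j ∈ Finset.univ.erase i,
      (if Function.update t i e j = g then 1 else 0) = (if t j = g then 1 else 0) := by
    intro j hj
    rw [Function.update_of_ne (Finset.ne_of_mem_erase hj)]
  rw [Finset.sum_congr rfl h, Function.update_self]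
  ring

lemma size_option {B E : Type*} [Fintype B] [DecidableEq E] (t : Option B → E) (g : E) :
    CoalitionSize t g = (if t none = g then 1 else 0) + CoalitionSize (fun j => t (some j)) g := by
  rw [coalitionSize_eq_sum, coalitionSize_eq_sum, Fintype.sum_option]

/-- Invariant maintained by the dynamics after the new player's first move. -/
def GInv {B E : Type*} [Fintype B] [Fintype E] [DecidableEq B] [DecidableEq E]
    (u : B → E → ℕ → ℝ) (v : E → ℕ → ℝ) (s : B → E)
    (t : Option B → E) (o : E) (M : Finset (Option B)) : Prop :=
  none ∈ M ∧
  (∀ g, CoalitionSize t g = CoalitionSize s g + (if g = o then 1 else 0)) ∧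
  (∀ i ∈ M, ∀ g, g ≠ t i →
      ExtUtility u v i g (CoalitionSize s g + 1)
        ≤ ExtUtility u v i (t i) (CoalitionSize s (t i) + 1)) ∧
  (∀ j : B, some j ∉ M → t (some j) = s j)

section main
variable {B E : Type*} [Fintype B] [Fintype E] [DecidableEq B] [DecidableEq E]
variable [Nonempty E]
variable {u : B → E → ℕ → ℝ} {v : E → ℕ → ℝ} {s : B → E}

lemma ext_spao (hu : SPAO u) (hv : ∀ e : E, ∀ m m' : ℕ, m ≤ m' → v e m' ≤ v e m) :
    SPAO (ExtUtility u v) := by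
  intro i e m m' h
  cases i with
  | none => exact hv e m m' h
  | some j => exact hu j e m m' h

lemma happyM (hE : SPAO (ExtUtility u v)) {t : Option B → E} {o : E} {M : Finset (Option B)}
    (hinv : GInv u v s t o M) {i : Option B} (hi : i ∈ M) (e : E) :
    ExtUtility u v i e (DevSize t i e) ≤ ExtUtility u v i (t i) (CoalitionSize t (t i)) := by
  obtain ⟨-, hsize, hcert, -⟩ := hinv
  by_cases he : e = t i
  · rw [he]
    have hds : DevSize t i (t i) = CoalitionSize t (t i) := by
      simp [DevSize]
    rw [hds]
  · have h1 : ExtUtility u v i (t i) (CoalitionSize s (t i) + 1)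
        ≤ ExtUtility u v i (t i) (CoalitionSize t (t i)) := by
      apply hE
      rw [hsize]
      split <;> omega
    have h2 : DevSize t i e = CoalitionSize t e + 1 := by
      rw [DevSize, if_neg (fun h => he h.symm)]
    have h3 : CoalitionSize s e + 1 ≤ CoalitionSize t e + 1 := by
      rw [hsize]; split <;> omega
    calc ExtUtility u v i e (DevSize t i e)
        ≤ ExtUtility u v i e (CoalitionSize s e + 1) := by rw [h2]; exact hE _ _ _ _ h3
      _ ≤ ExtUtility u v i (t i) (CoalitionSize s (t i) + 1) := hcert i hi e he
      _ ≤ _ := h1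

lemma happyU (hu : SPAO u) (hs : NashStable u s)
    {t : Option B → E} {o : E} {M : Finset (Option B)}
    (hinv : GInv u v s t o M) {j : B} (hj : some j ∉ M) (hne : s j ≠ o) (e : E) :
    ExtUtility u v (some j) e (DevSize t (some j) e)
      ≤ ExtUtility u v (some j) (t (some j)) (CoalitionSize t (t (some j))) := by
  obtain ⟨-, hsize, -, hun⟩ := hinv
  have ht : t (some j) = s j := hun j hj
  by_cases he : e = t (some j)
  · rw [he]
    have hds : DevSize t (some j) (t (some j)) = CoalitionSize t (t (some j)) := by
      simp [DevSize]
    rw [hds]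
  · have hcur : CoalitionSize t (s j) = CoalitionSize s (s j) := by
      rw [hsize, if_neg hne]
      omega
    have hesj : s j ≠ e := by
      intro h
      exact he (by rw [ht]; exact h.symm)
    have h2 : DevSize t (some j) e = CoalitionSize t e + 1 := by
      rw [DevSize, if_neg (fun h => he h.symm)]
    have h3 : CoalitionSize s e + 1 ≤ CoalitionSize t e + 1 := by
      rw [hsize]; split <;> omega
    have h4 : DevSize s j e = CoalitionSize s e + 1 := by
      rw [DevSize, if_neg hesj]
    calc ExtUtility u v (some j) e (DevSize t (some j) e)
        ≤ u j e (CoalitionSize s e + 1) := by rw [h2]; exact hu j e _ _ h3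
      _ = u j e (DevSize s j e) := by rw [h4]
      _ ≤ u j (s j) (CoalitionSize s (s j)) := hs j e
      _ = _ := by rw [ht, hcur]; rfl

lemma exists_mover (hE : SPAO (ExtUtility u v)) (hu : SPAO u) (hs : NashStable u s)
    {t : Option B → E} {o : E} {M : Finset (Option B)}
    (hinv : GInv u v s t o M) (hN : ¬ NashStable (ExtUtility u v) t) :
    ∃ j : B, some j ∉ M ∧ t (some j) = o ∧
      ∃ e' : E, e' ≠ o ∧
        (∀ g, ExtUtility u v (some j) g (CoalitionSize s g + 1)
            ≤ ExtUtility u v (some j) e' (CoalitionSize s e' + 1)) ∧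
        ExtUtility u v (some j) (t (some j)) (CoalitionSize t (t (some j)))
          < ExtUtility u v (some j) e' (DevSize t (some j) e') := by
  rw [NashStable] at hN
  push_neg at hN
  obtain ⟨i, e, hie⟩ := hN
  have hiM : i ∉ M := fun h => absurd (happyM hE hinv h e) (not_le.mpr hie)
  obtain ⟨j, rfl⟩ : ∃ j : B, i = some j := by
    cases i with
    | none => exact absurd hinv.1 hiM
    | some j => exact ⟨j, rfl⟩
  have hjo : s j = o := by
    by_contra hne
    exact absurd (happyU hu hs hinv hiM hne e) (not_le.mpr hie)
  have ht : t (some j) = o := (hinv.2.2.2 j hiM).trans hjo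
  obtain ⟨e', -, hmax⟩ := Finset.exists_max_image Finset.univ
    (fun g => ExtUtility u v (some j) g (CoalitionSize s g + 1)) Finset.univ_nonempty
  have hmax' : ∀ g, ExtUtility u v (some j) g (CoalitionSize s g + 1)
      ≤ ExtUtility u v (some j) e' (CoalitionSize s e' + 1) :=
    fun g => hmax g (Finset.mem_univ g)
  have hcur : CoalitionSize t (t (some j)) = CoalitionSize s o + 1 := by
    rw [ht, hinv.2.1, if_pos rfl]
  have hetj : e ≠ t (some j) := by
    intro h
    rw [h, DevSize, if_pos rfl] at hie
    exact lt_irrefl _ hie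
  have hdev : ExtUtility u v (some j) e (DevSize t (some j) e)
      ≤ ExtUtility u v (some j) e (CoalitionSize s e + 1) := by
    apply hE
    rw [DevSize, if_neg (fun h => hetj h.symm), hinv.2.1]
    split <;> omega
  have hstrict : ExtUtility u v (some j) (t (some j)) (CoalitionSize t (t (some j)))
      < ExtUtility u v (some j) e' (CoalitionSize s e' + 1) :=
    lt_of_lt_of_le hie (le_trans hdev (hmax' e))
  have he'o : e' ≠ o := by
    intro h
    rw [hcur, ← h] at hstrict
    rw [ht, h] at hstrict
    exact lt_irrefl _ hstrict
  refine ⟨j, hiM, ht, e', he'o, hmax', ?_⟩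
  have : DevSize t (some j) e' = CoalitionSize s e' + 1 := by
    rw [DevSize, if_neg (by rw [ht]; exact fun h => he'o h.symm), hinv.2.1, if_neg he'o]
  rw [this]
  exact hstrict

lemma converge (hu : SPAO u) (hv : ∀ e : E, ∀ m m' : ℕ, m ≤ m' → v e m' ≤ v e m)
    (hs : NashStable u s) :
    ∀ m : ℕ, ∀ (t : Option B → E) (o : E) (M : Finset (Option B)),
      GInv u v s t o M → Fintype.card (Option B) ≤ M.card + m →
      ∃ k ≤ m, ∃ f : ℕ → Option B → E, f 0 = t ∧
        (∀ r < k, DeviationStep (ExtUtility u v) (f r) (f (r + 1))) ∧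
        NashStable (ExtUtility u v) (f k) := by
  have hE : SPAO (ExtUtility u v) := ext_spao hu hv
  intro m
  induction m with
  | zero =>
    intro t o M hinv hcard
    by_cases hN : NashStable (ExtUtility u v) t
    · exact ⟨0, le_refl _, fun _ => t, rfl, fun r hr => absurd hr (Nat.not_lt_zero r), hN⟩
    · obtain ⟨j, hjM, -⟩ := exists_mover hE hu hs hinv hN
      have h1 : (insert (some j) M).card = M.card + 1 := Finset.card_insert_of_notMem hjM
      have h2 : (insert (some j) M).card ≤ Fintype.card (Option B) := Finset.card_le_univ _
      omega
  | succ m ih =>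
    intro t o M hinv hcard
    by_cases hN : NashStable (ExtUtility u v) t
    · exact ⟨0, Nat.zero_le _, fun _ => t, rfl, fun r hr => absurd hr (Nat.not_lt_zero r), hN⟩
    · obtain ⟨j, hjM, ht, e', he'o, hmax, hstrict⟩ := exists_mover hE hu hs hinv hN
      set t' := Function.update t (some j) e' with ht'
      have hsize' : ∀ g, CoalitionSize t' g = CoalitionSize s g + (if g = e' then 1 else 0) := by
        intro g
        have h := size_update t (some j) e' g
        rw [ht, hinv.2.1 g, ← ht'] at h
        by_cases h1 : g = o
        · have e1 : (if o = g then (1:ℕ) else 0) = 1 := if_pos h1.symm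
          have e2 : (if g = o then (1:ℕ) else 0) = 1 := if_pos h1
          have e3 : (if e' = g then (1:ℕ) else 0) = 0 := if_neg (fun hh => he'o (hh.trans h1))
          have e4 : (if g = e' then (1:ℕ) else 0) = 0 := if_neg (fun hh => he'o (hh.symm.trans h1))
          rw [e1, e2, e3] at h
          rw [e4]
          omega
        · have e1 : (if o = g then (1:ℕ) else 0) = 0 := if_neg (fun hh => h1 hh.symm)
          have e2 : (if g = o then (1:ℕ) else 0) = 0 := if_neg h1
          by_cases h2 : g = e'
          · have e3 : (if e' = g then (1:ℕ) else 0) = 1 := if_pos h2.symm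
            rw [e1, e2, e3] at h
            rw [if_pos h2]
            omega
          · have e3 : (if e' = g then (1:ℕ) else 0) = 0 := if_neg (fun hh => h2 hh.symm)
            rw [e1, e2, e3] at h
            rw [if_neg h2]
            omega
      have hinv' : GInv u v s t' e' (insert (some j) M) := by
        refine ⟨Finset.mem_insert_of_mem hinv.1, hsize', ?_, ?_⟩
        · intro i hi g hg
          rcases Finset.mem_insert.mp hi with hij | hiM
          · subst hij
            rw [ht', Function.update_self] at hg ⊢
            exact hmax g
          · have hij : i ≠ some j := fun h => hjM (h ▸ hiM)
            rw [ht', Function.update_of_ne hij] at hg ⊢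
            exact hinv.2.2.1 i hiM g hg
        · intro j' hj'
          have h1 : some j' ≠ some j := fun h => hj' (h ▸ Finset.mem_insert_self _ _)
          have h2 : some j' ∉ M := fun h => hj' (Finset.mem_insert_of_mem h)
          rw [ht', Function.update_of_ne h1]
          exact hinv.2.2.2 j' h2
      have hcard' : Fintype.card (Option B) ≤ (insert (some j) M).card + m := by
        rw [Finset.card_insert_of_notMem hjM]; omega
      obtain ⟨k, hk, f', hf0, hfs, hfN⟩ := ih t' e' (insert (some j) M) hinv' hcard'
      refine ⟨k + 1, by omega, fun n => Nat.rec t (fun n' _ => f' n') n, rfl, ?_, ?_⟩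
      · intro r hr
        match r with
        | 0 =>
          show DeviationStep (ExtUtility u v) t (f' 0)
          rw [hf0]
          exact ⟨some j, e', hstrict, rfl⟩
        | Nat.succ r' =>
          show DeviationStep (ExtUtility u v) (f' r') (f' (r' + 1))
          exact hfs r' (by omega)
      · show NashStable (ExtUtility u v) (f' k)
        exact hfN

end main

/-- If a SPAO instance is at a Nash stable partition and a new player with SPAO
utilities joins, then: (1) the extended instance satisfies SPAO; (2) it admits a Nash
stable partition; (3) from the old stable partition extended with the new player
(assigned anywhere), best-response dynamics reaches a Nash stable partition within at
most `|B| + 1` deviation steps. -/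
theorem spao_add_player
    {B E : Type*} [Fintype B] [Fintype E] [DecidableEq B] [DecidableEq E] [Nonempty E]
    (u : B → E → ℕ → ℝ) (v : E → ℕ → ℝ)
    (hu : SPAO u) (hv : ∀ e : E, ∀ m m' : ℕ, m ≤ m' → v e m' ≤ v e m)
    (s : B → E) (hs : NashStable u s) :
    SPAO (ExtUtility u v) ∧
    (∃ t : Option B → E, NashStable (ExtUtility u v) t) ∧
    (∀ e₀ : E, ∃ k : ℕ, k ≤ Fintype.card B + 1 ∧
      ∃ f : ℕ → Option B → E,
        f 0 = (fun i => Option.elim i e₀ s) ∧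
        (∀ t < k, DeviationStep (ExtUtility u v) (f t) (f (t + 1))) ∧
        NashStable (ExtUtility u v) (f k)) := by
  have hE : SPAO (ExtUtility u v) := ext_spao hu hv
  have key : ∀ e₀ : E, ∃ k : ℕ, k ≤ Fintype.card B + 1 ∧
      ∃ f : ℕ → Option B → E,
        f 0 = (fun i => Option.elim i e₀ s) ∧
        (∀ r < k, DeviationStep (ExtUtility u v) (f r) (f (r + 1))) ∧
        NashStable (ExtUtility u v) (f k) := by
    intro e₀
    set init : Option B → E := fun i => Option.elim i e₀ s with hinitdef
    have h2 : init none = e₀ := rfl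
    have hsize0 : ∀ g, CoalitionSize init g = CoalitionSize s g + (if g = e₀ then 1 else 0) := by
      intro g
      rw [size_option]
      have h1 : (fun j => init (some j)) = s := rfl
      rw [h1, h2]
      by_cases h : g = e₀
      · rw [if_pos h.symm, if_pos h]; omega
      · rw [if_neg (fun hh => h hh.symm), if_neg h]; omega
    have hcardO : Fintype.card (Option B)
        ≤ (Finset.card ({none} : Finset (Option B))) + Fintype.card B := by
      rw [Fintype.card_option, Finset.card_singleton]; omega
    by_cases hc : ∀ g, v g (CoalitionSize s g + 1) ≤ v e₀ (CoalitionSize s e₀ + 1)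
    · have hinv : GInv u v s init e₀ {none} := by
        refine ⟨Finset.mem_singleton_self none, hsize0, ?_, ?_⟩
        · intro i hi g hg
          rw [Finset.mem_singleton] at hi
          subst hi
          rw [h2] at hg ⊢
          exact hc g
        · intro j _
          rfl
      obtain ⟨k, hk, f, h0, hsteps, hN⟩ :=
        converge hu hv hs (Fintype.card B) init e₀ {none} hinv hcardO
      exact ⟨k, by omega, f, h0, hsteps, hN⟩
    · push_neg at hc
      obtain ⟨g₀, hg₀⟩ := hc
      obtain ⟨e', -, hmax⟩ := Finset.exists_max_image Finset.univ
        (fun g => v g (CoalitionSize s g + 1)) Finset.univ_nonempty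
      have hmax' : ∀ g, v g (CoalitionSize s g + 1) ≤ v e' (CoalitionSize s e' + 1) :=
        fun g => hmax g (Finset.mem_univ g)
      have h1 : v e₀ (CoalitionSize s e₀ + 1) < v e' (CoalitionSize s e' + 1) :=
        lt_of_lt_of_le hg₀ (hmax' g₀)
      have he'e₀ : e' ≠ e₀ := fun h => absurd (h ▸ h1) (lt_irrefl _)
      set t₁ : Option B → E := Function.update init none e' with ht₁
      have hsize1 : ∀ g, CoalitionSize t₁ g = CoalitionSize s g + (if g = e' then 1 else 0) := by
        intro g
        have h := size_update init none e' g
        rw [← ht₁, h2, hsize0 g] at h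
        by_cases hA : g = e₀
        · have hB : g ≠ e' := fun hh => he'e₀ (hh.symm.trans hA)
          have e1 : (if e₀ = g then (1:ℕ) else 0) = 1 := if_pos hA.symm
          have e2 : (if g = e₀ then (1:ℕ) else 0) = 1 := if_pos hA
          have e3 : (if e' = g then (1:ℕ) else 0) = 0 := if_neg (fun hh => hB hh.symm)
          rw [e1, e2, e3] at h
          rw [if_neg hB]
          omega
        · have e1 : (if e₀ = g then (1:ℕ) else 0) = 0 := if_neg (fun hh => hA hh.symm)
          have e2 : (if g = e₀ then (1:ℕ) else 0) = 0 := if_neg hA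
          by_cases hB : g = e'
          · have e3 : (if e' = g then (1:ℕ) else 0) = 1 := if_pos hB.symm
            rw [e1, e2, e3] at h
            rw [if_pos hB]
            omega
          · have e3 : (if e' = g then (1:ℕ) else 0) = 0 := if_neg (fun hh => hB hh.symm)
            rw [e1, e2, e3] at h
            rw [if_neg hB]
            omega
      have hinv1 : GInv u v s t₁ e' {none} := by
        refine ⟨Finset.mem_singleton_self none, hsize1, ?_, ?_⟩
        · intro i hi g hg
          rw [Finset.mem_singleton] at hi
          subst hi
          have h3 : t₁ none = e' := by rw [ht₁, Function.update_self]
          rw [h3] at hg ⊢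
          exact hmax' g
        · intro j _
          rw [ht₁, Function.update_of_ne (by simp)]
          rfl
      obtain ⟨k, hk, f', hf0, hfs, hfN⟩ :=
        converge hu hv hs (Fintype.card B) t₁ e' {none} hinv1 hcardO
      refine ⟨k + 1, by omega, fun n => Nat.rec init (fun n' _ => f' n') n, rfl, ?_, ?_⟩
      · intro r hr
        match r with
        | 0 =>
          show DeviationStep (ExtUtility u v) init (f' 0)
          rw [hf0]
          refine ⟨none, e', ?_, rfl⟩
          rw [h2]
          have h3 : CoalitionSize init e₀ = CoalitionSize s e₀ + 1 := by
            rw [hsize0, if_pos rfl]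
          have h4 : DevSize init none e' = CoalitionSize s e' + 1 := by
            rw [DevSize, h2, if_neg (fun hh => he'e₀ hh.symm), hsize0, if_neg he'e₀]
          rw [h3, h4]
          exact h1
        | Nat.succ r' =>
          show DeviationStep (ExtUtility u v) (f' r') (f' (r' + 1))
          exact hfs r' (by omega)
      · show NashStable (ExtUtility u v) (f' k)
        exact hfN
  refine ⟨hE, ?_, key⟩
  obtain ⟨k, -, f, -, -, hN⟩ := key (Classical.arbitrary E)
  exact ⟨f k, hN⟩
end

section
/- If a Q-function Q and the optimal Q-function Q* of a finite MDP satisfy ‖Q − Q*‖_∞ ≤ η, then the greedy policy π_Q with respect to Q satisfies, for every state s, V*(s) − V^{π_Q}(s) ≤ 2η/(1 − γ). -/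
/-- If `‖Q − Q*‖_∞ ≤ η` in a finite MDP with discount `γ ∈ [0,1)`, then the value of
the greedy policy w.r.t. `Q` is within `2η/(1 − γ)` of the optimal value at every
state. Here `Qstar` is the fixed point of the Bellman optimality operator, `π` is
greedy w.r.t. `Q`, and `Vpi` is the value function of `π`. -/
theorem greedy_policy_value_bound
    {S A : Type*} [Fintype S] [Fintype A] [Nonempty A]
    (r : S → A → ℝ) (P : S → A → S → ℝ) (γ η : ℝ)
    (hγ0 : 0 ≤ γ) (hγ1 : γ < 1) (hη : 0 ≤ η)
    (hP0 : ∀ s a s', 0 ≤ P s a s') (hP1 : ∀ s a, ∑ s', P s a s' = 1)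
    (Q Qstar : S → A → ℝ) (π : S → A) (Vpi : S → ℝ)
    (hQstar : ∀ s a, Qstar s a =
      r s a + γ * ∑ s', P s a s' *
        (Finset.univ.sup' Finset.univ_nonempty (fun a' => Qstar s' a')))
    (hgreedy : ∀ s, Finset.univ.sup' Finset.univ_nonempty (fun a => Q s a) = Q s (π s))
    (hVpi : ∀ s, Vpi s = r s (π s) + γ * ∑ s', P s (π s) s' * Vpi s')
    (hclose : ∀ s a, |Q s a - Qstar s a| ≤ η) :
    ∀ s : S,
      Finset.univ.sup' Finset.univ_nonempty (fun a => Qstar s a) - Vpi s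
        ≤ 2 * η / (1 - γ) := by
  intro s₀
  haveI : Nonempty S := ⟨s₀⟩
  set Vstar : S → ℝ := fun s => Finset.univ.sup' Finset.univ_nonempty (fun a => Qstar s a)
    with hVstar
  -- the max gap
  set M : ℝ := Finset.univ.sup' Finset.univ_nonempty (fun s => Vstar s - Vpi s) with hM
  have hle : ∀ s, Vstar s - Vpi s ≤ M := fun s =>
    Finset.le_sup' (fun s => Vstar s - Vpi s) (Finset.mem_univ s)
  -- step 1: Vstar s - Qstar s (π s) ≤ 2η
  have h1 : ∀ s, Vstar s ≤ Qstar s (π s) + 2 * η := by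
    intro s
    obtain ⟨a, -, ha⟩ := Finset.exists_mem_eq_sup' (Finset.univ_nonempty)
      (fun a => Qstar s a)
    have hQa : Q s a ≤ Q s (π s) := by
      rw [← hgreedy s]
      exact Finset.le_sup' (fun a => Q s a) (Finset.mem_univ a)
    have c1 := abs_le.mp (hclose s a)
    have c2 := abs_le.mp (hclose s (π s))
    have : Vstar s = Qstar s a := ha
    linarith
  -- step 2: Qstar s (π s) - Vpi s ≤ γ * M
  have h2 : ∀ s, Qstar s (π s) - Vpi s ≤ γ * M := by
    intro s
    have key : Qstar s (π s) - Vpi s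
        = γ * ∑ s', P s (π s) s' * (Vstar s' - Vpi s') := by
      rw [hQstar s (π s), hVpi s]
      have : ∀ s', P s (π s) s' * (Vstar s' - Vpi s')
          = P s (π s) s' * Vstar s' - P s (π s) s' * Vpi s' := fun s' => by ring
      simp only [this, Finset.sum_sub_distrib]
      ring
    rw [key]
    have hsum : ∑ s', P s (π s) s' * (Vstar s' - Vpi s') ≤ M := by
      calc ∑ s', P s (π s) s' * (Vstar s' - Vpi s')
          ≤ ∑ s', P s (π s) s' * M := by
            apply Finset.sum_le_sum
            intro s' _
            exact mul_le_mul_of_nonneg_left (hle s') (hP0 s (π s) s')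
        _ = M := by rw [← Finset.sum_mul, hP1 s (π s), one_mul]
    exact mul_le_mul_of_nonneg_left hsum hγ0
  -- combine: M ≤ 2η + γ M
  have hMbound : M ≤ 2 * η + γ * M := by
    obtain ⟨s, -, hs⟩ := Finset.exists_mem_eq_sup' (Finset.univ_nonempty)
      (fun s => Vstar s - Vpi s)
    have := h1 s
    have := h2 s
    have : M = Vstar s - Vpi s := hs
    linarith
  have hMfin : M ≤ 2 * η / (1 - γ) := by
    rw [le_div_iff₀ (by linarith)]
    linarith
  exact le_trans (hle s₀) hMfin
end
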